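/- Let Γ_1, Γ_2, ... be events in a probability space such that for some constant c > 0 and all N ≥ M ≥ 1, ∑_{m,n=M}^N (P(Γ_m ∩ Γ_n) − P(Γ_m)P(Γ_n)) ≤ c ∑_{n=M}^N P(Γ_n). If ∑_{n=1}^∞ P(Γ_n) = ∞, then almost surely lim_{N→∞} (∑_{n=1}^N 1_{Γ_n}) / (∑_{n=1}^N P(Γ_n)) = 1. -/

import Mathlib

/-!
Let `S N = ∑_{n ≤ N} 1_{Γ n}` and `E N = ∑_{n ≤ N} P(Γ n) = 𝔼[S N]`, so the hypothesis with `M = 1`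
reads `Var[S N] ≤ c E N`. Since `E` grows by at most `1` per step, there are times `T k` with
`(k + 1)² ≤ E (T k) ≤ (k + 1)² + 1`. Along them `∑ₖ Var[S (T k) / E (T k)] ≤ c ∑ₖ (k + 1)⁻² < ∞`,
so `∑ₖ (S (T k) / E (T k) - 1)²` has finite expectation and `S (T k) / E (T k) → 1` almost surely.
As `S` and `E` are monotone and `E (T (k + 1)) / E (T k) → 1`, each `S N / E N` with
`T k ≤ N < T (k + 1)` lies between `S (T k) / E (T (k + 1))` and `S (T (k + 1)) / E (T k)`,
which both tend to `1`.
-/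

open MeasureTheory Filter Topology ProbabilityTheory

lemma monotone_sum_Icc_one_of_nonneg {f : ℕ → ℝ} (hf : 0 ≤ f) :
    Monotone fun N => ∑ n ∈ Finset.Icc 1 N, f n := fun _ _ hMN =>
  Finset.sum_le_sum_of_subset_of_nonneg (Finset.Icc_subset_Icc_right hMN) fun n _ _ => hf n

lemma exists_strictMono_forall_sq_le_le_sq_add_one {E : ℕ → ℝ} (hE : Monotone E) (hE0 : E 0 < 1)
    (hstep : ∀ n, E (n + 1) ≤ E n + 1) (htop : Tendsto E atTop atTop) :
    ∃ T : ℕ → ℕ, StrictMono T ∧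
      ∀ k : ℕ, ((k : ℝ) + 1) ^ 2 ≤ E (T k) ∧ E (T k) ≤ ((k : ℝ) + 1) ^ 2 + 1 := by
  classical
  have hex : ∀ k : ℕ, ∃ n, ((k : ℝ) + 1) ^ 2 ≤ E n :=
    fun k => (htop.eventually_ge_atTop _).exists
  have hbounds : ∀ k : ℕ, ((k : ℝ) + 1) ^ 2 ≤ E (Nat.find (hex k)) ∧
      E (Nat.find (hex k)) ≤ ((k : ℝ) + 1) ^ 2 + 1 := by
    intro k
    refine ⟨Nat.find_spec (hex k), ?_⟩
    obtain ⟨m, hm⟩ : ∃ m, Nat.find (hex k) = m + 1 :=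
      Nat.exists_eq_add_one.2 <| Nat.pos_of_ne_zero fun h0 => by
        have := Nat.find_spec (hex k)
        rw [h0] at this
        nlinarith [k.cast_nonneg (α := ℝ)]
    have hlt : E m < ((k : ℝ) + 1) ^ 2 := not_le.1 (Nat.find_min (hex k) (by omega))
    rw [hm]
    linarith [hstep m]
  refine ⟨fun k => Nat.find (hex k), strictMono_nat_of_lt_succ fun k => ?_, hbounds⟩
  by_contra! hle
  have h := hE hle
  have := (hbounds k).2
  have := (hbounds (k + 1)).1
  push_cast at *
  nlinarith [k.cast_nonneg (α := ℝ)]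

lemma tendsto_div_succ_of_sq_le_le_sq_add_one {a : ℕ → ℝ}
    (ha : ∀ k : ℕ, ((k : ℝ) + 1) ^ 2 ≤ a k ∧ a k ≤ ((k : ℝ) + 1) ^ 2 + 1) :
    Tendsto (fun k => a (k + 1) / a k) atTop (𝓝 1) := by
  have hx : Tendsto (fun k : ℕ => 1 / ((k : ℝ) + 1)) atTop (𝓝 0) :=
    tendsto_one_div_add_atTop_nhds_zero_nat
  have hupper : Tendsto (fun k : ℕ => 1 + 2 * (1 / ((k : ℝ) + 1)) + 2 * (1 / ((k : ℝ) + 1)) ^ 2)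
      atTop (𝓝 1) := by
    simpa using (tendsto_const_nhds.add (hx.const_mul 2)).add ((hx.pow 2).const_mul 2)
  refine tendsto_of_tendsto_of_tendsto_of_le_of_le tendsto_const_nhds hupper (fun k => ?_)
    (fun k => ?_)
  · have h0 := ha k
    have h1 := ha (k + 1)
    push_cast at h1
    have hk := k.cast_nonneg (α := ℝ)
    rw [le_div_iff₀ (by nlinarith), one_mul]
    nlinarith
  · have h0 := ha k
    have h1 := ha (k + 1)
    push_cast at h1
    have hk : (0 : ℝ) < (k : ℝ) + 1 := by positivity
    rw [div_le_iff₀ (by nlinarith)]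
    field_simp
    nlinarith

lemma exists_strictMono_summable_inv_tendsto_div_succ {E : ℕ → ℝ} (hE : Monotone E)
    (hE0 : E 0 < 1) (hstep : ∀ n, E (n + 1) ≤ E n + 1) (htop : Tendsto E atTop atTop) :
    ∃ T : ℕ → ℕ, StrictMono T ∧ (∀ k, 0 < E (T k)) ∧ Summable (fun k => (E (T k))⁻¹) ∧
      Tendsto (fun k => E (T (k + 1)) / E (T k)) atTop (𝓝 1) := by
  obtain ⟨T, hT, hET⟩ := exists_strictMono_forall_sq_le_le_sq_add_one hE hE0 hstep htop
  have hpos : ∀ k, 0 < E (T k) := fun k => lt_of_lt_of_le (by positivity) (hET k).1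
  refine ⟨T, hT, hpos, ?_, tendsto_div_succ_of_sq_le_le_sq_add_one hET⟩
  exact ((summable_nat_add_iff 1).2 (Real.summable_nat_pow_inv.2 one_lt_two)).of_nonneg_of_le
    (fun k => inv_nonneg.2 (hpos k).le)
    fun k => inv_anti₀ (by positivity) (by exact_mod_cast (hET k).1)

lemma StrictMono.eventually_exists_le_lt_succ {T : ℕ → ℕ} (hT : StrictMono T) (k₀ : ℕ) :
    ∀ᶠ N in atTop, ∃ k, k₀ ≤ k ∧ T k ≤ N ∧ N < T (k + 1) := by
  filter_upwards [eventually_ge_atTop (T k₀)] with N hN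
  obtain ⟨k, hk, hk'⟩ := hT.exists_between_of_tendsto_atTop hT.tendsto_atTop
    (x := N + 1) (Nat.lt_succ_of_le ((hT.monotone k₀.zero_le).trans hN))
  refine ⟨k, ?_, Nat.lt_succ_iff.1 hk, hk'⟩
  by_contra! h
  have := hT.monotone (show k + 1 ≤ k₀ by omega)
  omega

lemma tendsto_div_of_tendsto_div_comp_strictMono {S E : ℕ → ℝ} {T : ℕ → ℕ} (hS0 : 0 ≤ S)
    (hS : Monotone S) (hE : Monotone E) (hT : StrictMono T) (hET : ∀ k, 0 < E (T k))
    (hratio : Tendsto (fun k => E (T (k + 1)) / E (T k)) atTop (𝓝 1))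
    (hsub : Tendsto (fun k => S (T k) / E (T k)) atTop (𝓝 1)) :
    Tendsto (fun N => S N / E N) atTop (𝓝 1) := by
  have hlow : Tendsto (fun k => S (T k) / E (T (k + 1))) atTop (𝓝 1) := by
    have h := hsub.div hratio one_ne_zero
    rw [div_one] at h
    refine h.congr fun k => ?_
    simp only [Pi.div_apply]
    field_simp [(hET k).ne', (hET (k + 1)).ne']
  have hup : Tendsto (fun k => S (T (k + 1)) / E (T k)) atTop (𝓝 1) := by
    have h := ((tendsto_add_atTop_iff_nat 1).2 hsub).mul hratio
    rw [one_mul] at h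
    refine h.congr fun k => ?_
    field_simp [(hET k).ne', (hET (k + 1)).ne']
  refine tendsto_order.2 ⟨fun a ha => ?_, fun b hb => ?_⟩
  · obtain ⟨k₀, hk₀⟩ := eventually_atTop.1 ((tendsto_order.1 hlow).1 a ha)
    filter_upwards [hT.eventually_exists_le_lt_succ k₀] with N ⟨k, hk, hTk, hNT⟩
    exact (hk₀ k hk).trans_le <| div_le_div₀ (hS0 N) (hS hTk)
      ((hET k).trans_le (hE hTk)) (hE hNT.le)
  · obtain ⟨k₀, hk₀⟩ := eventually_atTop.1 ((tendsto_order.1 hup).2 b hb)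
    filter_upwards [hT.eventually_exists_le_lt_succ k₀] with N ⟨k, hk, hTk, hNT⟩
    exact (div_le_div₀ (hS0 _) (hS hNT.le) (hET k) (hE hTk)).trans_lt (hk₀ k hk)

namespace ProbabilityTheory

variable {Ω : Type*} [MeasurableSpace Ω] {μ : Measure Ω} [IsProbabilityMeasure μ]

lemma covariance_indicator_one {A B : Set Ω} (hA : MeasurableSet A) (hB : MeasurableSet B) :
    cov[A.indicator (fun _ => (1 : ℝ)), B.indicator (fun _ => (1 : ℝ)); μ] =
      μ.real (A ∩ B) - μ.real A * μ.real B := by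
  rw [covariance_eq_sub ((memLp_const 1).indicator hA) ((memLp_const 1).indicator hB),
    ← Pi.one_def, ← Set.inter_indicator_one, integral_indicator_one (hA.inter hB),
    integral_indicator_one hA, integral_indicator_one hB]

lemma variance_sum_indicator_one {ι : Type*} {Γ : ι → Set Ω} (hΓ : ∀ n, MeasurableSet (Γ n))
    (s : Finset ι) :
    Var[fun ω => ∑ n ∈ s, (Γ n).indicator (fun _ => (1 : ℝ)) ω; μ] =
      ∑ m ∈ s, ∑ n ∈ s, (μ.real (Γ m ∩ Γ n) - μ.real (Γ m) * μ.real (Γ n)) := by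
  rw [variance_fun_sum' fun n _ => (memLp_const 1).indicator (hΓ n)]
  simp only [covariance_indicator_one (hΓ _) (hΓ _)]

lemma integral_sum_indicator_one {ι : Type*} {Γ : ι → Set Ω} (hΓ : ∀ n, MeasurableSet (Γ n))
    (s : Finset ι) :
    μ[fun ω => ∑ n ∈ s, (Γ n).indicator (fun _ => (1 : ℝ)) ω] = ∑ n ∈ s, μ.real (Γ n) := by
  rw [integral_finsetSum _ fun n _ => (integrable_const (1 : ℝ)).indicator (hΓ n)]
  exact Finset.sum_congr rfl fun n _ => integral_indicator_one (hΓ n)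

lemma ae_tendsto_sub_integral_of_summable_variance {X : ℕ → Ω → ℝ} (hX : ∀ k, MemLp (X k) 2 μ)
    (hsum : Summable fun k => Var[X k; μ]) :
    ∀ᵐ ω ∂μ, Tendsto (fun k => X k ω - μ[X k]) atTop (𝓝 0) := by
  have hmeas : ∀ k, AEMeasurable (fun ω => ‖X k ω - μ[X k]‖ₑ ^ 2) μ :=
    fun k => ((hX k).aemeasurable.sub_const _).enorm.pow_const 2
  have hfin : ∫⁻ ω, ∑' k, ‖X k ω - μ[X k]‖ₑ ^ 2 ∂μ ≠ ⊤ := by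
    rw [lintegral_tsum hmeas]
    change ∑' k, evariance (X k) μ ≠ ⊤
    simp_rw [← (hX _).ofReal_variance_eq]
    rw [← ENNReal.ofReal_tsum_of_nonneg (fun k => variance_nonneg _ _) hsum]
    exact ENNReal.ofReal_ne_top
  filter_upwards [ae_lt_top' (AEMeasurable.tsum hmeas) hfin] with ω hω
  have hsq := (ENNReal.continuous_rpow_const (y := ((2 : ℕ) : ℝ)⁻¹)).tendsto 0 |>.comp
    (ENNReal.tendsto_atTop_zero_of_tsum_ne_top hω.ne)
  simp only [Function.comp_def, ENNReal.pow_rpow_inv_natCast two_ne_zero] at hsq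
  exact tendsto_zero_iff_enorm_tendsto_zero.2 (by simpa using hsq)

lemma ae_tendsto_div_integral_of_variance_le {Y : ℕ → Ω → ℝ} (hY : ∀ k, MemLp (Y k) 2 μ) {c : ℝ}
    (hvar : ∀ k, Var[Y k; μ] ≤ c * μ[Y k]) (hsum : Summable fun k => (μ[Y k])⁻¹)
    (hpos : ∀ k, 0 < μ[Y k]) :
    ∀ᵐ ω ∂μ, Tendsto (fun k => Y k ω / μ[Y k]) atTop (𝓝 1) := by
  have hvar_div : ∀ k, Var[fun ω => Y k ω / μ[Y k]; μ] ≤ c * (μ[Y k])⁻¹ := fun k =>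
    calc Var[fun ω => Y k ω / μ[Y k]; μ] = Var[Y k; μ] / μ[Y k] ^ 2 := by
          simp only [div_eq_mul_inv, variance_mul_const, inv_pow]
      _ ≤ c * μ[Y k] / μ[Y k] ^ 2 := by gcongr; exact hvar k
      _ = c * (μ[Y k])⁻¹ := by field_simp [(hpos k).ne']
  have hmean : ∀ k, μ[fun ω => Y k ω / μ[Y k]] = 1 := fun k => by
    rw [integral_div, div_self (hpos k).ne']
  filter_upwards [ae_tendsto_sub_integral_of_summable_variance
    (fun k => by simpa only [div_eq_mul_inv] using (hY k).mul_const (μ[Y k])⁻¹)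
    ((hsum.mul_left c).of_nonneg_of_le (fun k => variance_nonneg _ _) hvar_div)] with ω hω
  simpa [hmean] using hω.add_const 1

end ProbabilityTheory

theorem stmt2 {Ω : Type*} [MeasurableSpace Ω] (μ : Measure Ω) [IsProbabilityMeasure μ]
    (Γ : ℕ → Set Ω) (hΓ : ∀ n, MeasurableSet (Γ n))
    (c : ℝ)
    (hquasi : ∀ M N : ℕ, 1 ≤ M → M ≤ N →
      ∑ m ∈ Finset.Icc M N, ∑ n ∈ Finset.Icc M N,
        ((μ (Γ m ∩ Γ n)).toReal - (μ (Γ m)).toReal * (μ (Γ n)).toReal)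
      ≤ c * ∑ n ∈ Finset.Icc M N, (μ (Γ n)).toReal)
    (hdiv : Tendsto (fun N : ℕ => ∑ n ∈ Finset.Icc 1 N, (μ (Γ n)).toReal) atTop atTop) :
    ∀ᵐ ω ∂μ, Tendsto (fun N : ℕ =>
      (∑ n ∈ Finset.Icc 1 N, (Γ n).indicator (fun _ => (1 : ℝ)) ω) /
      (∑ n ∈ Finset.Icc 1 N, (μ (Γ n)).toReal)) atTop (nhds 1) := by
  let S : ℕ → Ω → ℝ := fun N ω => ∑ n ∈ Finset.Icc 1 N, (Γ n).indicator (fun _ => (1 : ℝ)) ω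
  let E : ℕ → ℝ := fun N => ∑ n ∈ Finset.Icc 1 N, (μ (Γ n)).toReal
  have hE_step : ∀ N, E (N + 1) ≤ E N + 1 := fun N => by
    simp only [E]
    rw [Finset.sum_Icc_succ_top (Nat.le_add_left 1 N)]
    gcongr
    exact measureReal_le_one
  have hS_mean : ∀ N, μ[S N] = E N := fun N => integral_sum_indicator_one hΓ _
  have hS_var : ∀ N, Var[S N; μ] ≤ c * μ[S N] := by
    intro N
    rw [hS_mean, variance_sum_indicator_one hΓ]
    rcases Nat.eq_zero_or_pos N with rfl | hN
    · simp [E]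
    · exact hquasi 1 N le_rfl hN
  have hE_mono : Monotone E := monotone_sum_Icc_one_of_nonneg fun n => ENNReal.toReal_nonneg
  obtain ⟨T, hT, hET_pos, hET_summable, hratio⟩ :=
    exists_strictMono_summable_inv_tendsto_div_succ hE_mono (by simp [E]) hE_step hdiv
  filter_upwards [ae_tendsto_div_integral_of_variance_le (Y := fun k => S (T k))
    (fun k => memLp_finsetSum _ fun n _ => (memLp_const 1).indicator (hΓ n))
    (fun k => hS_var (T k)) (by simpa only [hS_mean] using hET_summable)
    (fun k => (hS_mean (T k)).symm ▸ hET_pos k)] with ω hω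
  simp only [hS_mean] at hω
  have hS_nonneg : ∀ n, 0 ≤ (Γ n).indicator (fun _ => (1 : ℝ)) ω :=
    fun n => Set.indicator_nonneg (fun _ _ => zero_le_one) ω
  exact tendsto_div_of_tendsto_div_comp_strictMono
    (fun N => Finset.sum_nonneg fun n _ => hS_nonneg n) (monotone_sum_Icc_one_of_nonneg hS_nonneg)
    hE_mono hT hET_pos hratio hω
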